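/- arXiv:1701.08687 — 4 statements merged into one kernel-verified Lean document; each statement's English description precedes it below -/
import Mathlib

section
/- Double robustness in g: for any measurable functions ḡ(0,·), ḡ(1,·) (square integrable), if the propensity score m₀ is correct then E[ (ḡ(1,Z) − ḡ(0,Z)) + D(Y − ḡ(1,Z))/m₀(Z) − (1−D)(Y − ḡ(0,Z))/(1−m₀(Z)) ] = E[g₀(1,Z) − g₀(0,Z)]. -/
open MeasureTheory ProbabilityTheory

/-! Split each inverse-probability-weighted arm as
`T (Y - ḡ(Z)) / p(Z) = T (Y - g(Z)) / p(Z) + T (g(Z) - ḡ(Z)) / p(Z)`.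
Conditioning on `Z`, the first term has mean zero because `g` is the true regression, and in the
second `T` may be replaced by `E[T ∣ Z] = p(Z)`, which cancels the weight; so the arm has mean
`E[g(Z) - ḡ(Z)]` whatever `ḡ` is. With `T = D, p = m₀` and `T = 1 - D, p = 1 - m₀`, the `ḡ`
terms then cancel against the plug-in term `ḡ(1,Z) - ḡ(0,Z)`. -/

section ConditionalExpectation

variable {Ω : Type*} {m mΩ : MeasurableSpace Ω} {μ : Measure Ω}

theorem integral_mul_eq_of_condExp_ae_eq (hm : m ≤ mΩ) [SigmaFinite (μ.trim hm)]
    {f g h : Ω → ℝ} (hf : StronglyMeasurable[m] f) (hfg : Integrable (f * g) μ)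
    (hg : Integrable g μ) (hgh : μ[g | m] =ᵐ[μ] h) :
    ∫ ω, f ω * g ω ∂μ = ∫ ω, f ω * h ω ∂μ :=
  (integral_condExp hm).symm.trans <| integral_congr_ae <|
    (condExp_mul_of_stronglyMeasurable_left hf hfg hg).trans (.mul .rfl hgh)

theorem condExp_const_sub [IsFiniteMeasure μ] (hm : m ≤ mΩ) (c : ℝ) {f : Ω → ℝ}
    (hf : Integrable f μ) :
    μ[fun ω => c - f ω | m] =ᵐ[μ] fun ω => c - μ[f | m] ω := by
  filter_upwards [condExp_sub (integrable_const c) hf m] with ω hω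
  rw [show (fun ω => c - f ω) = (fun _ => c) - f from rfl, hω, condExp_const hm]
  rfl

end ConditionalExpectation

section InverseProbabilityWeighting

variable {Ω 𝓩 : Type*} [MeasurableSpace Ω] [MeasurableSpace 𝓩] {μ : Measure Ω}
  [IsFiniteMeasure μ] {Y T : Ω → ℝ} {Z : Ω → 𝓩} {g gbar p : 𝓩 → ℝ} {ε C : ℝ}

theorem integral_inverse_probability_weighted_residual (hε : 0 < ε) (hZ : Measurable Z)
    (hg : Measurable g) (hgbar : Measurable gbar) (hp : Measurable p)
    (hT : AEStronglyMeasurable T μ) (hTC : ∀ᵐ ω ∂μ, ‖T ω‖ ≤ C)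
    (hreg : μ[fun ω => T ω * (Y ω - g (Z ω)) | MeasurableSpace.comap Z inferInstance]
      =ᵐ[μ] 0)
    (hprop : μ[T | MeasurableSpace.comap Z inferInstance] =ᵐ[μ] fun ω => p (Z ω))
    (hover : ∀ᵐ ω ∂μ, ε ≤ p (Z ω))
    (hY : Integrable Y μ) (hgZ : Integrable (fun ω => g (Z ω)) μ)
    (hgbarZ : Integrable (fun ω => gbar (Z ω)) μ) :
    ∫ ω, T ω * (Y ω - gbar (Z ω)) / p (Z ω) ∂μ = ∫ ω, (g (Z ω) - gbar (Z ω)) ∂μ := by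
  have hmZ := hZ.comap_le
  have hZm : Measurable[MeasurableSpace.comap Z inferInstance] Z := comap_measurable Z
  set w : Ω → ℝ := fun ω => (p (Z ω))⁻¹
  set bias : Ω → ℝ := fun ω => (p (Z ω))⁻¹ * (g (Z ω) - gbar (Z ω))
  set resid : Ω → ℝ := fun ω => T ω * (Y ω - g (Z ω))
  have hw_bound : ∀ᵐ ω ∂μ, ‖w ω‖ ≤ ε⁻¹ := hover.mono fun ω h => by
    rw [norm_inv, Real.norm_of_nonneg (hε.le.trans h)]
    exact inv_anti₀ hε h
  have hw_meas : AEStronglyMeasurable w μ := (hp.inv.comp hZ).aestronglyMeasurable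
  have hresid : Integrable resid μ := (hY.sub hgZ).bdd_mul hT hTC
  have hbias : Integrable bias μ := (hgZ.sub hgbarZ).bdd_mul hw_meas hw_bound
  have hw_resid : Integrable (w * resid) μ := hresid.bdd_mul hw_meas hw_bound
  have hbias_T : Integrable (bias * T) μ := hbias.mul_bdd hT hTC
  have hsplit :
      (fun ω => T ω * (Y ω - gbar (Z ω)) / p (Z ω)) =ᵐ[μ] w * resid + bias * T := by
    filter_upwards [hover] with ω hω
    have : p (Z ω) ≠ 0 := (hε.trans_le hω).ne'
    simp only [Pi.add_apply, Pi.mul_apply, w, bias, resid]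
    field_simp
    ring
  have hresid_part : ∫ ω, w ω * resid ω ∂μ = 0 := by
    rw [integral_mul_eq_of_condExp_ae_eq hmZ (f := w)
      (hp.inv.comp hZm).stronglyMeasurable hw_resid hresid hreg]
    simp
  have hbias_part : ∫ ω, bias ω * T ω ∂μ = ∫ ω, (g (Z ω) - gbar (Z ω)) ∂μ := by
    rw [integral_mul_eq_of_condExp_ae_eq hmZ (f := bias)
      ((hp.inv.mul (hg.sub hgbar)).comp hZm).stronglyMeasurable hbias_T (.of_bound hT C hTC) hprop]
    refine integral_congr_ae (hover.mono fun ω hω => ?_)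
    have : p (Z ω) ≠ 0 := (hε.trans_le hω).ne'
    simp only [bias]
    field_simp
  rw [integral_congr_ae hsplit, integral_add' hw_resid hbias_T]
  simp only [Pi.mul_apply]
  rw [hresid_part, hbias_part, zero_add]

end InverseProbabilityWeighting

theorem statement4_general {Ω 𝓩 : Type*} [MeasurableSpace Ω] [MeasurableSpace 𝓩]
    (μ : Measure Ω) [IsProbabilityMeasure μ]
    (Y D : Ω → ℝ) (Z : Ω → 𝓩) (g0 g1 gbar0 gbar1 m0 : 𝓩 → ℝ) (ε : ℝ) (hε : 0 < ε)
    (hD : Measurable D) (hZ : Measurable Z)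
    (hg0 : Measurable g0) (hg1 : Measurable g1) (hm0 : Measurable m0)
    (hgbar0 : Measurable gbar0) (hgbar1 : Measurable gbar1)
    (hDbin : ∀ ω, D ω = 0 ∨ D ω = 1)
    -- correctness of the outcome regressions `g₀(d,Z) = E[Y ∣ D = d, Z]`:
    (hreg1 : μ[fun ω => D ω * (Y ω - g1 (Z ω)) |
        MeasurableSpace.comap Z inferInstance] =ᵐ[μ] 0)
    (hreg0 : μ[fun ω => (1 - D ω) * (Y ω - g0 (Z ω)) |
        MeasurableSpace.comap Z inferInstance] =ᵐ[μ] 0)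
    -- the propensity score is correct: `m₀(Z) = E[D ∣ Z]`:
    (hm : μ[D | MeasurableSpace.comap Z inferInstance] =ᵐ[μ] fun ω => m0 (Z ω))
    (hover : ∀ᵐ ω ∂μ, ε ≤ m0 (Z ω) ∧ m0 (Z ω) ≤ 1 - ε)
    -- square integrability:
    (hYL2 : MemLp Y 2 μ) (hg0L2 : MemLp (fun ω => g0 (Z ω)) 2 μ)
    (hg1L2 : MemLp (fun ω => g1 (Z ω)) 2 μ)
    (hgbar0L2 : MemLp (fun ω => gbar0 (Z ω)) 2 μ)
    (hgbar1L2 : MemLp (fun ω => gbar1 (Z ω)) 2 μ)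
    (hint1 : Integrable (fun ω => D ω * (Y ω - gbar1 (Z ω)) / m0 (Z ω)) μ)
    (hint0 : Integrable (fun ω => (1 - D ω) * (Y ω - gbar0 (Z ω)) / (1 - m0 (Z ω))) μ) :
    ∫ ω, ((gbar1 (Z ω) - gbar0 (Z ω))
        + D ω * (Y ω - gbar1 (Z ω)) / m0 (Z ω)
        - (1 - D ω) * (Y ω - gbar0 (Z ω)) / (1 - m0 (Z ω))) ∂μ
      = ∫ ω, (g1 (Z ω) - g0 (Z ω)) ∂μ := by
  have hD_le : ∀ᵐ ω ∂μ, ‖D ω‖ ≤ 1 :=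
    .of_forall fun ω => by rcases hDbin ω with h | h <;> simp [h]
  have h1D_le : ∀ᵐ ω ∂μ, ‖1 - D ω‖ ≤ 1 :=
    .of_forall fun ω => by rcases hDbin ω with h | h <;> simp [h]
  have hYi := hYL2.integrable one_le_two
  have hg0i := hg0L2.integrable one_le_two
  have hg1i := hg1L2.integrable one_le_two
  have hgbar0i := hgbar0L2.integrable one_le_two
  have hgbar1i := hgbar1L2.integrable one_le_two
  have hm' : μ[fun ω => 1 - D ω | MeasurableSpace.comap Z inferInstance] =ᵐ[μ]
      fun ω => 1 - m0 (Z ω) := by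
    filter_upwards [hm, condExp_const_sub hZ.comap_le 1
      (.of_bound hD.aestronglyMeasurable 1 hD_le)] with ω h' h
    rw [h, h']
  have htreated := integral_inverse_probability_weighted_residual hε hZ hg1 hgbar1 hm0
    hD.aestronglyMeasurable hD_le hreg1 hm (hover.mono fun _ h => h.1) hYi hg1i hgbar1i
  have hcontrol := integral_inverse_probability_weighted_residual (T := fun ω => 1 - D ω)
    (p := fun z => 1 - m0 z) hε hZ hg0 hgbar0
    (measurable_const.sub hm0) (measurable_const.sub hD).aestronglyMeasurable h1D_le hreg0 hm'
    (hover.mono fun _ h => le_sub_comm.mp h.2) hYi hg0i hgbar0i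
  have hplugin : Integrable (fun ω => gbar1 (Z ω) - gbar0 (Z ω)) μ := hgbar1i.sub hgbar0i
  rw [integral_sub ?_ hint0, integral_add hplugin hint1, htreated, hcontrol,
    integral_sub hgbar1i hgbar0i, integral_sub hg1i hgbar1i, integral_sub hg0i hgbar0i,
    integral_sub hg1i hg0i]
  · ring
  · exact hplugin.add hint1

/-- Double robustness in the outcome regression: if the propensity score `m₀` is correct, the
AIPW functional evaluated at arbitrary square-integrable candidates `ḡ(0,·), ḡ(1,·)` identifies
the ATE `E[g₀(1,Z) − g₀(0,Z)]`. -/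
theorem statement4 {Ω 𝓩 : Type*} [MeasurableSpace Ω] [MeasurableSpace 𝓩]
    (μ : Measure Ω) [IsProbabilityMeasure μ]
    (Y D : Ω → ℝ) (Z : Ω → 𝓩) (g0 g1 gbar0 gbar1 m0 : 𝓩 → ℝ) (ε : ℝ) (hε : 0 < ε)
    (hY : Measurable Y) (hD : Measurable D) (hZ : Measurable Z)
    (hg0 : Measurable g0) (hg1 : Measurable g1) (hm0 : Measurable m0)
    (hgbar0 : Measurable gbar0) (hgbar1 : Measurable gbar1)
    (hDbin : ∀ ω, D ω = 0 ∨ D ω = 1)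
    -- correctness of the outcome regressions `g₀(d,Z) = E[Y ∣ D = d, Z]`:
    (hreg1 : μ[fun ω => D ω * (Y ω - g1 (Z ω)) |
        MeasurableSpace.comap Z inferInstance] =ᵐ[μ] 0)
    (hreg0 : μ[fun ω => (1 - D ω) * (Y ω - g0 (Z ω)) |
        MeasurableSpace.comap Z inferInstance] =ᵐ[μ] 0)
    -- the propensity score is correct: `m₀(Z) = E[D ∣ Z]`:
    (hm : μ[D | MeasurableSpace.comap Z inferInstance] =ᵐ[μ] fun ω => m0 (Z ω))
    (hover : ∀ᵐ ω ∂μ, ε ≤ m0 (Z ω) ∧ m0 (Z ω) ≤ 1 - ε)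
    -- square integrability:
    (hYL2 : MemLp Y 2 μ) (hg0L2 : MemLp (fun ω => g0 (Z ω)) 2 μ)
    (hg1L2 : MemLp (fun ω => g1 (Z ω)) 2 μ)
    (hgbar0L2 : MemLp (fun ω => gbar0 (Z ω)) 2 μ)
    (hgbar1L2 : MemLp (fun ω => gbar1 (Z ω)) 2 μ)
    (hint1 : Integrable (fun ω => D ω * (Y ω - gbar1 (Z ω)) / m0 (Z ω)) μ)
    (hint0 : Integrable (fun ω => (1 - D ω) * (Y ω - gbar0 (Z ω)) / (1 - m0 (Z ω))) μ) :
    ∫ ω, ((gbar1 (Z ω) - gbar0 (Z ω))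
        + D ω * (Y ω - gbar1 (Z ω)) / m0 (Z ω)
        - (1 - D ω) * (Y ω - gbar0 (Z ω)) / (1 - m0 (Z ω))) ∂μ
      = ∫ ω, (g1 (Z ω) - g0 (Z ω)) ∂μ :=
  statement4_general μ Y D Z g0 g1 gbar0 gbar1 m0 ε hε hD hZ hg0 hg1 hm0 hgbar0 hgbar1 hDbin hreg1
    hreg0 hm hover hYL2 hg0L2 hg1L2 hgbar0L2 hgbar1L2 hint1 hint0
end

section
/- Double robustness in m: for any measurable function m̄ with ε ≤ m̄(Z) ≤ 1−ε a.s., if the outcome regressions g₀(0,·), g₀(1,·) are correct then E[ (g₀(1,Z) − g₀(0,Z)) + D(Y − g₀(1,Z))/m̄(Z) − (1−D)(Y − g₀(0,Z))/(1−m̄(Z)) ] = E[g₀(1,Z) − g₀(0,Z)]. -/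
open MeasureTheory

/-! Writing `ζ = Y - (D g₁(Z) + (1 - D) g₀(Z))`, a binary `D` gives `D (Y - g₁(Z)) = D ζ` and
`(1 - D)(Y - g₀(Z)) = (1 - D) ζ`, so both correction terms have the form `w(D, Z) ζ` with
`w(d, z) = d / m̄(z)` resp. `(1 - d) / (1 - m̄(z))`. Since `E[ζ ∣ D, Z] = 0`, pulling the
`σ(D, Z)`-measurable weight out of the conditional expectation shows that each has mean zero,
whatever `m̄` is. -/

theorem mul_sub_eq_mul_sub_mix {R : Type*} [CommRing R] {d : R} (hd : IsIdempotentElem d)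
    (y a b : R) : d * (y - a) = d * (y - (d * a + (1 - d) * b)) := by
  linear_combination (a - b) * hd.eq

theorem one_sub_mul_sub_eq_one_sub_mul_sub_mix {R : Type*} [CommRing R] {d : R}
    (hd : IsIdempotentElem d) (y a b : R) :
    (1 - d) * (y - b) = (1 - d) * (y - (d * a + (1 - d) * b)) := by
  linear_combination (b - a) * hd.eq

theorem MeasureTheory.Integrable.mul_add_one_sub_mul {α : Type*} [MeasurableSpace α]
    {μ : Measure α} {d a b : α → ℝ} {c : ℝ} (ha : Integrable a μ) (hb : Integrable b μ)
    (hd : AEStronglyMeasurable d μ) (hd_bound : ∀ᵐ x ∂μ, ‖d x‖ ≤ c) :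
    Integrable (fun x => d x * a x + (1 - d x) * b x) μ := by
  have h : Integrable (fun x => d x * (a x - b x) + b x) μ :=
    ((ha.sub hb).bdd_mul hd hd_bound).add hb
  exact h.congr (.of_forall fun x => by ring)

theorem integral_comp_mul_eq_zero_of_condExp_comap_eq_zero {Ω β : Type*} [MeasurableSpace Ω]
    [MeasurableSpace β] {μ : Measure Ω} [IsFiniteMeasure μ] {X : Ω → β} {ζ : Ω → ℝ}
    (hX : Measurable X) (hζ : Integrable ζ μ)
    (hζX : μ[ζ | MeasurableSpace.comap X inferInstance] =ᵐ[μ] 0) {w : β → ℝ} (hw : Measurable w)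
    (hwζ : Integrable (fun ω => w (X ω) * ζ ω) μ) :
    ∫ ω, w (X ω) * ζ ω ∂μ = 0 := by
  have hwX : StronglyMeasurable[MeasurableSpace.comap X inferInstance] (fun ω => w (X ω)) :=
    (hw.comp (comap_measurable X)).stronglyMeasurable
  have hpull := condExp_mul_of_stronglyMeasurable_left hwX hwζ hζ
  calc ∫ ω, w (X ω) * ζ ω ∂μ
      = ∫ ω, (μ[(fun ω => w (X ω)) * ζ | MeasurableSpace.comap X inferInstance]) ω ∂μ :=
        (integral_condExp hX.comap_le).symm
    _ = 0 := integral_eq_zero_of_ae <| hpull.trans <| by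
        filter_upwards [hζX] with ω hω
        simp [hω]

theorem statement5_general {Ω 𝓩 : Type*} [MeasurableSpace Ω] [MeasurableSpace 𝓩]
    (μ : Measure Ω) [IsProbabilityMeasure μ]
    (Y D : Ω → ℝ) (Z : Ω → 𝓩) (g0 g1 mbar : 𝓩 → ℝ)
    (hD : Measurable D) (hZ : Measurable Z)
    (hmbar : Measurable mbar)
    (hDbin : ∀ ω, D ω = 0 ∨ D ω = 1)
    -- `Y = g₀(D,Z) + ζ` with `E[ζ ∣ D, Z] = 0`, i.e. the outcome regressions are correct:
    (hζ : μ[fun ω => Y ω - (D ω * g1 (Z ω) + (1 - D ω) * g0 (Z ω)) |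
        MeasurableSpace.comap (fun ω => (D ω, Z ω)) inferInstance] =ᵐ[μ] 0)
    -- square integrability:
    (hYL2 : MemLp Y 2 μ) (hg0L2 : MemLp (fun ω => g0 (Z ω)) 2 μ)
    (hg1L2 : MemLp (fun ω => g1 (Z ω)) 2 μ)
    (hint1 : Integrable (fun ω => D ω * (Y ω - g1 (Z ω)) / mbar (Z ω)) μ)
    (hint0 : Integrable (fun ω => (1 - D ω) * (Y ω - g0 (Z ω)) / (1 - mbar (Z ω))) μ) :
    ∫ ω, ((g1 (Z ω) - g0 (Z ω))
        + D ω * (Y ω - g1 (Z ω)) / mbar (Z ω)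
        - (1 - D ω) * (Y ω - g0 (Z ω)) / (1 - mbar (Z ω))) ∂μ
      = ∫ ω, (g1 (Z ω) - g0 (Z ω)) ∂μ := by
  set ζ : Ω → ℝ := fun ω => Y ω - (D ω * g1 (Z ω) + (1 - D ω) * g0 (Z ω))
  have hDidem (ω : Ω) : IsIdempotentElem (D ω) := by
    rcases hDbin ω with h | h <;> simp [h, IsIdempotentElem]
  have hg1 : Integrable (fun ω => g1 (Z ω)) μ := hg1L2.integrable one_le_two
  have hg0 : Integrable (fun ω => g0 (Z ω)) μ := hg0L2.integrable one_le_two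
  have hζint : Integrable ζ μ := (hYL2.integrable one_le_two).sub <|
    hg1.mul_add_one_sub_mul (c := 1) hg0 hD.aestronglyMeasurable <| .of_forall fun ω => by
      rcases hDbin ω with h | h <;> simp [h]
  have hweight {w : ℝ × 𝓩 → ℝ} (hw : Measurable w) :=
    integral_comp_mul_eq_zero_of_condExp_comap_eq_zero (hD.prodMk hZ) hζint hζ hw
  have e1 (ω : Ω) : D ω * (Y ω - g1 (Z ω)) / mbar (Z ω) = D ω / mbar (Z ω) * ζ ω := by
    rw [mul_sub_eq_mul_sub_mix (hDidem ω) _ _ (g0 (Z ω)), div_mul_eq_mul_div]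
  have e0 (ω : Ω) : (1 - D ω) * (Y ω - g0 (Z ω)) / (1 - mbar (Z ω))
      = (1 - D ω) / (1 - mbar (Z ω)) * ζ ω := by
    rw [one_sub_mul_sub_eq_one_sub_mul_sub_mix (hDidem ω) _ (g1 (Z ω)), div_mul_eq_mul_div]
  have h1 : ∫ ω, D ω * (Y ω - g1 (Z ω)) / mbar (Z ω) ∂μ = 0 := by
    simp_rw [e1] at hint1 ⊢
    exact hweight (w := fun p => p.1 / mbar p.2) (by fun_prop) hint1
  have h0 : ∫ ω, (1 - D ω) * (Y ω - g0 (Z ω)) / (1 - mbar (Z ω)) ∂μ = 0 := by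
    simp_rw [e0] at hint0 ⊢
    exact hweight (w := fun p => (1 - p.1) / (1 - mbar p.2)) (by fun_prop) hint0
  have hdiff : Integrable (fun ω => g1 (Z ω) - g0 (Z ω)) μ := hg1.sub hg0
  have hdiff1 : Integrable
      (fun ω => g1 (Z ω) - g0 (Z ω) + D ω * (Y ω - g1 (Z ω)) / mbar (Z ω)) μ := hdiff.add hint1
  rw [integral_sub hdiff1 hint0, integral_add hdiff hint1, h1, h0]
  ring

/-- Double robustness in the propensity score: if the outcome regressions `g₀(0,·), g₀(1,·)` are
correct, the AIPW functional evaluated at an arbitrary candidate `m̄` bounded in `[ε, 1−ε]`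
identifies the ATE `E[g₀(1,Z) − g₀(0,Z)]`. -/
theorem statement5 {Ω 𝓩 : Type*} [MeasurableSpace Ω] [MeasurableSpace 𝓩]
    (μ : Measure Ω) [IsProbabilityMeasure μ]
    (Y D : Ω → ℝ) (Z : Ω → 𝓩) (g0 g1 mbar : 𝓩 → ℝ) (ε : ℝ) (hε : 0 < ε)
    (hY : Measurable Y) (hD : Measurable D) (hZ : Measurable Z)
    (hg0 : Measurable g0) (hg1 : Measurable g1) (hmbar : Measurable mbar)
    (hDbin : ∀ ω, D ω = 0 ∨ D ω = 1)
    -- `Y = g₀(D,Z) + ζ` with `E[ζ ∣ D, Z] = 0`, i.e. the outcome regressions are correct: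
    (hζ : μ[fun ω => Y ω - (D ω * g1 (Z ω) + (1 - D ω) * g0 (Z ω)) |
        MeasurableSpace.comap (fun ω => (D ω, Z ω)) inferInstance] =ᵐ[μ] 0)
    -- `m̄` is bounded away from 0 and 1:
    (hover : ∀ᵐ ω ∂μ, ε ≤ mbar (Z ω) ∧ mbar (Z ω) ≤ 1 - ε)
    -- square integrability:
    (hYL2 : MemLp Y 2 μ) (hg0L2 : MemLp (fun ω => g0 (Z ω)) 2 μ)
    (hg1L2 : MemLp (fun ω => g1 (Z ω)) 2 μ)
    (hint1 : Integrable (fun ω => D ω * (Y ω - g1 (Z ω)) / mbar (Z ω)) μ)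
    (hint0 : Integrable (fun ω => (1 - D ω) * (Y ω - g0 (Z ω)) / (1 - mbar (Z ω))) μ) :
    ∫ ω, ((g1 (Z ω) - g0 (Z ω))
        + D ω * (Y ω - g1 (Z ω)) / mbar (Z ω)
        - (1 - D ω) * (Y ω - g0 (Z ω)) / (1 - mbar (Z ω))) ∂μ
      = ∫ ω, (g1 (Z ω) - g0 (Z ω)) ∂μ :=
  statement5_general μ Y D Z g0 g1 mbar hD hZ hmbar hDbin hζ hYL2 hg0L2 hg1L2 hint1 hint0
end

section
/- Neyman orthogonality of the AIPW ATE score with respect to the propensity score: for any bounded measurable direction h(z) such that m₀ + t h stays in [ε/2, 1−ε/2] for small t, the derivative at t = 0 of t ↦ E[ (g₀(1,Z) − g₀(0,Z)) + D(Y − g₀(1,Z))/(m₀(Z)+t h(Z)) − (1−D)(Y − g₀(0,Z))/(1−m₀(Z)−t h(Z)) − θ₀ ] equals 0. -/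
open MeasureTheory ProbabilityTheory
open scoped Topology

/-!
For every propensity `p` bounded away from `0` and `1`, a binary `D` turns the AIPW score into
`g₁(Z) - g₀(Z) - θ₀ + w(D, Z) ζ` with the weight `w(d, z) = d / p(z) - (1 - d) / (1 - p(z))` and the
residual `ζ = Y - g₀(D, Z)`. Since `ζ` has conditional mean zero given `(D, Z)` and `w(D, Z)` is a
bounded `σ(D, Z)`-measurable weight, the expected score vanishes for every such `p`. Along the path
`m₀ + t h` it is therefore identically zero for `|t| < δ`, so its derivative at `0` is zero.
-/

theorem integral_mul_eq_zero_of_condExp_eq_zero {Ω : Type*} {m mΩ : MeasurableSpace Ω}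
    {μ : Measure Ω} (hm : m ≤ mΩ) [SigmaFinite (μ.trim hm)] {g ζ : Ω → ℝ}
    (hg : StronglyMeasurable[m] g) (hgζ : Integrable (g * ζ) μ) (hζ : Integrable ζ μ)
    (hζ0 : μ[ζ | m] =ᵐ[μ] 0) :
    ∫ ω, (g * ζ) ω ∂μ = 0 := by
  rw [← integral_condExp hm]
  calc ∫ ω, μ[g * ζ | m] ω ∂μ = ∫ ω, (g * 0 : Ω → ℝ) ω ∂μ :=
        integral_congr_ae ((condExp_mul_of_stronglyMeasurable_left hg hgζ hζ).trans
          (hζ0.mul_left))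
    _ = 0 := by simp

noncomputable def ipwWeight (d p : ℝ) : ℝ :=
  d / p - (1 - d) / (1 - p)

theorem abs_ipwWeight_le {c d p : ℝ} (hc : 0 < c) (hd : d = 0 ∨ d = 1) (hp : c ≤ p ∧ p ≤ 1 - c) :
    |ipwWeight d p| ≤ c⁻¹ := by
  rcases hd with rfl | rfl
  · have : 0 < 1 - p := by linarith
    simpa [ipwWeight, abs_of_pos this] using inv_anti₀ hc (by linarith)
  · simpa [ipwWeight, abs_of_pos (hc.trans_le hp.1)] using inv_anti₀ hc hp.1

/-- The AIPW score at `W = (y, d, z)`; the arguments `g₀, g₁, p` stand for `g₀(0, z)`, `g₀(1, z)`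
and `m(z)`. -/
noncomputable def aipwScore (θ y d g₀ g₁ p : ℝ) : ℝ :=
  (g₁ - g₀) + d * (y - g₁) / p - (1 - d) * (y - g₀) / (1 - p) - θ

theorem aipwScore_eq_add_ipwWeight_mul {θ y d g₀ g₁ p : ℝ} (hd : d = 0 ∨ d = 1) :
    aipwScore θ y d g₀ g₁ p = (g₁ - g₀) + ipwWeight d p * (y - (d * g₁ + (1 - d) * g₀)) - θ := by
  rcases hd with rfl | rfl <;> simp only [aipwScore, ipwWeight] <;> ring

theorem integral_aipwScore_eq_zero {Ω 𝓩 : Type*} [MeasurableSpace Ω] [MeasurableSpace 𝓩]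
    {μ : Measure Ω} [IsProbabilityMeasure μ] {Y D : Ω → ℝ} {Z : Ω → 𝓩} {g₀ g₁ p : 𝓩 → ℝ} {c : ℝ}
    (hc : 0 < c) (hD : Measurable D) (hZ : Measurable Z) (hp : Measurable p)
    (hDbin : ∀ ω, D ω = 0 ∨ D ω = 1)
    (hζ : μ[fun ω => Y ω - (D ω * g₁ (Z ω) + (1 - D ω) * g₀ (Z ω)) |
        MeasurableSpace.comap (fun ω => (D ω, Z ω)) inferInstance] =ᵐ[μ] 0)
    (hpc : ∀ᵐ ω ∂μ, c ≤ p (Z ω) ∧ p (Z ω) ≤ 1 - c)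
    (hY : Integrable Y μ) (hg₀ : Integrable (fun ω => g₀ (Z ω)) μ)
    (hg₁ : Integrable (fun ω => g₁ (Z ω)) μ) :
    ∫ ω, aipwScore (∫ ω', (g₁ (Z ω') - g₀ (Z ω')) ∂μ) (Y ω) (D ω) (g₀ (Z ω)) (g₁ (Z ω))
      (p (Z ω)) ∂μ = 0 := by
  set θ := ∫ ω', (g₁ (Z ω') - g₀ (Z ω')) ∂μ
  set ζ : Ω → ℝ := fun ω => Y ω - (D ω * g₁ (Z ω) + (1 - D ω) * g₀ (Z ω))
  set w : Ω → ℝ := fun ω => ipwWeight (D ω) (p (Z ω))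
  have hDZ := hD.prodMk hZ
  have hw_meas : StronglyMeasurable[MeasurableSpace.comap (fun ω => (D ω, Z ω)) inferInstance] w :=
    have : Measurable fun q : ℝ × 𝓩 => ipwWeight q.1 (p q.2) := by
      unfold ipwWeight; fun_prop
    (this.comp (comap_measurable _)).stronglyMeasurable
  have hD_le : ∀ᵐ ω ∂μ, ‖D ω‖ ≤ 1 := .of_forall fun ω => by rcases hDbin ω with h | h <;> simp [h]
  have hD'_le : ∀ᵐ ω ∂μ, ‖1 - D ω‖ ≤ 1 :=
    .of_forall fun ω => by rcases hDbin ω with h | h <;> simp [h]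
  have hζ_int : Integrable ζ μ :=
    hY.sub ((hg₁.bdd_mul hD.aestronglyMeasurable hD_le).add
      (hg₀.bdd_mul (measurable_const.sub hD).aestronglyMeasurable hD'_le))
  have hwζ_int : Integrable (w * ζ) μ :=
    hζ_int.bdd_mul (hw_meas.mono hDZ.comap_le).aestronglyMeasurable
      (by filter_upwards [hpc] with ω hω using abs_ipwWeight_le hc (hDbin ω) hω)
  have hscore : ∀ ω, aipwScore θ (Y ω) (D ω) (g₀ (Z ω)) (g₁ (Z ω)) (p (Z ω))
      = (g₁ (Z ω) - g₀ (Z ω)) + (w * ζ) ω - θ := fun ω =>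
    aipwScore_eq_add_ipwWeight_mul (hDbin ω)
  have hA : Integrable (fun ω => g₁ (Z ω) - g₀ (Z ω)) μ := hg₁.sub hg₀
  have hAwζ : Integrable (fun ω => g₁ (Z ω) - g₀ (Z ω) + (w * ζ) ω) μ := hA.add hwζ_int
  simp_rw [hscore]
  rw [integral_sub hAwζ (integrable_const θ), integral_add hA hwζ_int,
    integral_mul_eq_zero_of_condExp_eq_zero hDZ.comap_le hw_meas hwζ_int hζ_int hζ]
  simp [θ]

theorem statement7_general {Ω 𝓩 : Type*} [MeasurableSpace Ω] [MeasurableSpace 𝓩]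
    (μ : Measure Ω) [IsProbabilityMeasure μ]
    (Y D : Ω → ℝ) (Z : Ω → 𝓩) (g0 g1 m0 h : 𝓩 → ℝ) (ε δ : ℝ)
    (hε : 0 < ε) (hδ : 0 < δ)
    (hD : Measurable D) (hZ : Measurable Z)
    (hm0 : Measurable m0)
    (hh : Measurable h)
    (hDbin : ∀ ω, D ω = 0 ∨ D ω = 1)
    -- `g₀(d,Z) = E[Y ∣ D = d, Z]`:
    (hζ : μ[fun ω => Y ω - (D ω * g1 (Z ω) + (1 - D ω) * g0 (Z ω)) |
        MeasurableSpace.comap (fun ω => (D ω, Z ω)) inferInstance] =ᵐ[μ] 0)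
    -- the perturbed propensity score stays in `[ε/2, 1−ε/2]` for small `t`:
    (hpath : ∀ᵐ ω ∂μ, ∀ t : ℝ, |t| < δ →
        ε / 2 ≤ m0 (Z ω) + t * h (Z ω) ∧ m0 (Z ω) + t * h (Z ω) ≤ 1 - ε / 2)
    -- moments:
    (hYL2 : MemLp Y 2 μ) (hg0L2 : MemLp (fun ω => g0 (Z ω)) 2 μ)
    (hg1L2 : MemLp (fun ω => g1 (Z ω)) 2 μ) :
    HasDerivAt (fun t : ℝ => ∫ ω,
        ((g1 (Z ω) - g0 (Z ω))
        + D ω * (Y ω - g1 (Z ω)) / (m0 (Z ω) + t * h (Z ω))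
        - (1 - D ω) * (Y ω - g0 (Z ω)) / (1 - m0 (Z ω) - t * h (Z ω))
        - (∫ ω', (g1 (Z ω') - g0 (Z ω')) ∂μ)) ∂μ) 0 0 := by
  have hvanish : ∀ t : ℝ, |t| < δ → ∫ ω,
      ((g1 (Z ω) - g0 (Z ω))
        + D ω * (Y ω - g1 (Z ω)) / (m0 (Z ω) + t * h (Z ω))
        - (1 - D ω) * (Y ω - g0 (Z ω)) / (1 - m0 (Z ω) - t * h (Z ω))
        - (∫ ω', (g1 (Z ω') - g0 (Z ω')) ∂μ)) ∂μ = 0 := fun t ht => by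
    have := integral_aipwScore_eq_zero (p := fun z => m0 z + t * h z) (half_pos hε) hD hZ
      (hm0.add (hh.const_mul t)) hDbin hζ (by filter_upwards [hpath] with ω hω using hω t ht)
      (hYL2.integrable one_le_two) (hg0L2.integrable one_le_two) (hg1L2.integrable one_le_two)
    simpa only [aipwScore, sub_sub (1 : ℝ)] using this
  refine (hasDerivAt_const (0 : ℝ) (0 : ℝ)).congr_of_eventuallyEq ?_
  filter_upwards [Metric.ball_mem_nhds (0 : ℝ) hδ] with t ht
  exact hvanish t (by simpa using ht)

/-- Neyman orthogonality of the AIPW ATE score with respect to the propensity score: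
for any bounded measurable direction `h(z)` keeping `m₀ + t h` in `[ε/2, 1−ε/2]` for small `t`,
the derivative at `t = 0` of `t ↦ E[ψ(W; θ₀, (g₀, m₀ + t h))]` is zero. -/
theorem statement7 {Ω 𝓩 : Type*} [MeasurableSpace Ω] [MeasurableSpace 𝓩]
    (μ : Measure Ω) [IsProbabilityMeasure μ]
    (Y D : Ω → ℝ) (Z : Ω → 𝓩) (g0 g1 m0 h : 𝓩 → ℝ) (ε δ M : ℝ)
    (hε : 0 < ε) (hδ : 0 < δ)
    (hY : Measurable Y) (hD : Measurable D) (hZ : Measurable Z)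
    (hg0 : Measurable g0) (hg1 : Measurable g1) (hm0 : Measurable m0)
    (hh : Measurable h) (hhbdd : ∀ z, |h z| ≤ M)
    (hDbin : ∀ ω, D ω = 0 ∨ D ω = 1)
    -- `g₀(d,Z) = E[Y ∣ D = d, Z]`:
    (hζ : μ[fun ω => Y ω - (D ω * g1 (Z ω) + (1 - D ω) * g0 (Z ω)) |
        MeasurableSpace.comap (fun ω => (D ω, Z ω)) inferInstance] =ᵐ[μ] 0)
    -- `m₀(Z) = E[D ∣ Z]`:
    (hm : μ[D | MeasurableSpace.comap Z inferInstance] =ᵐ[μ] fun ω => m0 (Z ω))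
    (hover : ∀ᵐ ω ∂μ, ε ≤ m0 (Z ω) ∧ m0 (Z ω) ≤ 1 - ε)
    -- the perturbed propensity score stays in `[ε/2, 1−ε/2]` for small `t`:
    (hpath : ∀ᵐ ω ∂μ, ∀ t : ℝ, |t| < δ →
        ε / 2 ≤ m0 (Z ω) + t * h (Z ω) ∧ m0 (Z ω) + t * h (Z ω) ≤ 1 - ε / 2)
    -- moments:
    (hYL2 : MemLp Y 2 μ) (hg0L2 : MemLp (fun ω => g0 (Z ω)) 2 μ)
    (hg1L2 : MemLp (fun ω => g1 (Z ω)) 2 μ) :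
    HasDerivAt (fun t : ℝ => ∫ ω,
        ((g1 (Z ω) - g0 (Z ω))
        + D ω * (Y ω - g1 (Z ω)) / (m0 (Z ω) + t * h (Z ω))
        - (1 - D ω) * (Y ω - g0 (Z ω)) / (1 - m0 (Z ω) - t * h (Z ω))
        - (∫ ω', (g1 (Z ω') - g0 (Z ω')) ∂μ)) ∂μ) 0 0 :=
  statement7_general μ Y D Z g0 g1 m0 h ε δ hε hδ hD hZ hm0 hh hDbin hζ hpath hYL2 hg0L2 hg1L2
end

section
/- Variance lower bound for the AIPW ATE score: σ² := E[ψ²(W; θ₀, η₀)] ≥ E[ν² ζ²], where ν = D − m₀(Z) and ζ = Y − g₀(D,Z). -/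
open MeasureTheory ProbabilityTheory
open scoped Topology

/-! Write the score as `A + B` with `A = g₁(Z) − g₀(Z) − θ₀` and `B = ν ζ / (m₀(Z)(1 − m₀(Z)))`.
Since `A B` is `ζ` times a `(D, Z)`-measurable factor, `E[ζ ∣ D, Z] = 0` kills the cross term, so
`E[ψ²] = E[A²] + E[B²] ≥ E[B²]`, and `m₀(1 − m₀) ≤ 1` gives `B² ≥ ν² ζ²`. For binary `D` one has
`|ν| ≥ m₀(1 − m₀)`, hence `|ζ| ≤ |B|` and `ζ ∈ L²`. -/

theorem div_sub_div_one_sub_eq (d z m : ℝ) (hm : m ≠ 0) (hm' : 1 - m ≠ 0) :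
    d * z / m - (1 - d) * z / (1 - m) = (d - m) * z / (m * (1 - m)) := by
  field_simp
  ring

theorem sq_le_sq_div_of_pos_of_le_one (x : ℝ) {t : ℝ} (ht : 0 < t) (ht₁ : t ≤ 1) :
    x ^ 2 ≤ (x / t) ^ 2 := by
  rw [div_pow]
  exact le_div_self (sq_nonneg x) (by positivity) (pow_le_one₀ ht.le ht₁)

theorem mul_one_sub_le_abs_sub {d m : ℝ} (hd : d = 0 ∨ d = 1) (hm : 0 < m) (hm' : m < 1) :
    m * (1 - m) ≤ |d - m| := by
  rcases hd with rfl | rfl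
  · rw [zero_sub, abs_neg, abs_of_pos hm]; nlinarith
  · rw [abs_of_nonneg (by linarith)]; nlinarith

theorem abs_le_abs_sub_mul_div {d m : ℝ} (z : ℝ) (hd : d = 0 ∨ d = 1) (hm : 0 < m) (hm' : m < 1) :
    |z| ≤ |(d - m) * z / (m * (1 - m))| := by
  have hpos : 0 < m * (1 - m) := mul_pos hm (by linarith)
  rw [abs_div, abs_mul, abs_of_pos hpos, le_div_iff₀ hpos, mul_comm]
  exact mul_le_mul_of_nonneg_right (mul_one_sub_le_abs_sub hd hm hm') (abs_nonneg z)

section Integral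

variable {Ω : Type*} {m mΩ : MeasurableSpace Ω} {μ : Measure Ω}

theorem integral_mul_eq_zero_of_condExp_eq_zero_s11 [IsFiniteMeasure μ] (hm : m ≤ mΩ) {f g : Ω → ℝ}
    (hf : StronglyMeasurable[m] f) (hfg : Integrable (f * g) μ) (hg : Integrable g μ)
    (hg₀ : μ[g | m] =ᵐ[μ] 0) : ∫ ω, f ω * g ω ∂μ = 0 := by
  calc ∫ ω, f ω * g ω ∂μ = ∫ ω, (μ[f * g | m]) ω ∂μ := (integral_condExp hm).symm
    _ = ∫ ω, (f * μ[g | m]) ω ∂μ :=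
        integral_congr_ae (condExp_mul_of_stronglyMeasurable_left hf hfg hg)
    _ = 0 := integral_eq_zero_of_ae <| by filter_upwards [hg₀] with ω h; simp [h]

theorem integral_add_sq_of_integral_mul_eq_zero {f g : Ω → ℝ} (hf : MemLp f 2 μ)
    (hg : MemLp g 2 μ) (h : ∫ ω, f ω * g ω ∂μ = 0) :
    ∫ ω, (f ω + g ω) ^ 2 ∂μ = ∫ ω, f ω ^ 2 ∂μ + ∫ ω, g ω ^ 2 ∂μ := by
  have hfg : Integrable (fun ω => 2 * (f ω * g ω)) μ := (hf.integrable_mul hg).const_mul 2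
  have hrest : Integrable (fun ω => g ω ^ 2 + 2 * (f ω * g ω)) μ := hg.integrable_sq.add hfg
  calc ∫ ω, (f ω + g ω) ^ 2 ∂μ = ∫ ω, f ω ^ 2 + (g ω ^ 2 + 2 * (f ω * g ω)) ∂μ := by
        congr with ω; ring
    _ = ∫ ω, f ω ^ 2 ∂μ + ∫ ω, g ω ^ 2 ∂μ := by
        rw [integral_add hf.integrable_sq hrest,
          integral_add hg.integrable_sq hfg, integral_const_mul, h, mul_zero, add_zero]

end Integral

theorem statement11_general {Ω 𝓩 : Type*} [MeasurableSpace Ω] [MeasurableSpace 𝓩]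
    (μ : Measure Ω) [IsProbabilityMeasure μ]
    (Y D : Ω → ℝ) (Z : Ω → 𝓩) (g0 g1 m0 : 𝓩 → ℝ)
    (hY : Measurable Y) (hD : Measurable D) (hZ : Measurable Z)
    (hg0 : Measurable g0) (hg1 : Measurable g1) (hm0 : Measurable m0)
    (hDbin : ∀ ω, D ω = 0 ∨ D ω = 1)
    -- `ζ = Y − g₀(D,Z)` with `E[ζ ∣ D, Z] = 0`:
    (hζ : μ[fun ω => Y ω - (D ω * g1 (Z ω) + (1 - D ω) * g0 (Z ω)) |
        MeasurableSpace.comap (fun ω => (D ω, Z ω)) inferInstance] =ᵐ[μ] 0)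
    -- `m₀(Z) = E[D ∣ Z]` with `0 < m₀(Z) < 1` a.s.:
    (hover : ∀ᵐ ω ∂μ, 0 < m0 (Z ω) ∧ m0 (Z ω) < 1)
    -- finite second moments of the score and its pieces:
    (ha2 : Integrable (fun ω =>
        (g1 (Z ω) - g0 (Z ω) - (∫ ω', (g1 (Z ω') - g0 (Z ω')) ∂μ)) ^ 2) μ)
    (hb2 : Integrable (fun ω =>
        ((D ω - m0 (Z ω)) * (Y ω - (D ω * g1 (Z ω) + (1 - D ω) * g0 (Z ω)))
          / (m0 (Z ω) * (1 - m0 (Z ω)))) ^ 2) μ) :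
    ∫ ω, ((g1 (Z ω) - g0 (Z ω) - (∫ ω', (g1 (Z ω') - g0 (Z ω')) ∂μ))
        + D ω * (Y ω - (D ω * g1 (Z ω) + (1 - D ω) * g0 (Z ω))) / m0 (Z ω)
        - (1 - D ω) * (Y ω - (D ω * g1 (Z ω) + (1 - D ω) * g0 (Z ω))) / (1 - m0 (Z ω))) ^ 2 ∂μ
      ≥ ∫ ω, (D ω - m0 (Z ω)) ^ 2
          * (Y ω - (D ω * g1 (Z ω) + (1 - D ω) * g0 (Z ω))) ^ 2 ∂μ := by
  set c := ∫ ω', (g1 (Z ω') - g0 (Z ω')) ∂μ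
  set ζ : Ω → ℝ := fun ω => Y ω - (D ω * g1 (Z ω) + (1 - D ω) * g0 (Z ω))
  set A : Ω → ℝ := fun ω => g1 (Z ω) - g0 (Z ω) - c
  set B : Ω → ℝ := fun ω => (D ω - m0 (Z ω)) * ζ ω / (m0 (Z ω) * (1 - m0 (Z ω)))
  have hA : MemLp A 2 μ := (memLp_two_iff_integrable_sq (by fun_prop)).2 ha2
  have hB : MemLp B 2 μ := (memLp_two_iff_integrable_sq (by fun_prop)).2 hb2
  have hζL2 : MemLp ζ 2 μ := hB.of_le (by fun_prop) <| by
    filter_upwards [hover] with ω hω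
    exact abs_le_abs_sub_mul_div _ (hDbin ω) hω.1 hω.2
  set φ : ℝ × 𝓩 → ℝ := fun p => (g1 p.2 - g0 p.2 - c) * (p.1 - m0 p.2) / (m0 p.2 * (1 - m0 p.2))
  have hAB : (fun ω => A ω * B ω) = (φ ∘ fun ω => (D ω, Z ω)) * ζ := by
    ext ω; simp only [A, B, φ, Function.comp_apply, Pi.mul_apply]; ring
  have horth : ∫ ω, A ω * B ω ∂μ = 0 := by
    rw [hAB]
    exact integral_mul_eq_zero_of_condExp_eq_zero_s11 (hD.prodMk hZ).comap_le
      ((by fun_prop : Measurable φ).comp (comap_measurable _)).stronglyMeasurable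
      (by rw [← hAB]; exact hA.integrable_mul hB) (hζL2.integrable one_le_two) hζ
  have hscore : ∀ᵐ ω ∂μ, (A ω + D ω * ζ ω / m0 (Z ω) - (1 - D ω) * ζ ω / (1 - m0 (Z ω))) ^ 2
      = (A ω + B ω) ^ 2 := by
    filter_upwards [hover] with ω hω
    rw [add_sub_assoc, div_sub_div_one_sub_eq _ _ _ hω.1.ne' (sub_pos.2 hω.2).ne']
  have hbound : ∀ᵐ ω ∂μ, (D ω - m0 (Z ω)) ^ 2 * ζ ω ^ 2 ≤ B ω ^ 2 := by
    filter_upwards [hover] with ω ⟨hm, hm'⟩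
    rw [← mul_pow]
    exact sq_le_sq_div_of_pos_of_le_one _ (mul_pos hm (sub_pos.2 hm')) (by nlinarith)
  calc ∫ ω, (A ω + D ω * ζ ω / m0 (Z ω) - (1 - D ω) * ζ ω / (1 - m0 (Z ω))) ^ 2 ∂μ
      = ∫ ω, (A ω + B ω) ^ 2 ∂μ := integral_congr_ae hscore
    _ = ∫ ω, A ω ^ 2 ∂μ + ∫ ω, B ω ^ 2 ∂μ := integral_add_sq_of_integral_mul_eq_zero hA hB horth
    _ ≥ ∫ ω, B ω ^ 2 ∂μ := le_add_of_nonneg_left (integral_nonneg fun _ => sq_nonneg _)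
    _ ≥ ∫ ω, (D ω - m0 (Z ω)) ^ 2 * ζ ω ^ 2 ∂μ :=
        integral_mono_of_nonneg (ae_of_all _ fun _ => by positivity) hb2 hbound

/-- Variance lower bound for the AIPW ATE score: `E[ψ²(W; θ₀, η₀)] ≥ E[ν² ζ²]`
with `ν = D − m₀(Z)` and `ζ = Y − g₀(D,Z)`. -/
theorem statement11 {Ω 𝓩 : Type*} [MeasurableSpace Ω] [MeasurableSpace 𝓩]
    (μ : Measure Ω) [IsProbabilityMeasure μ]
    (Y D : Ω → ℝ) (Z : Ω → 𝓩) (g0 g1 m0 : 𝓩 → ℝ)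
    (hY : Measurable Y) (hD : Measurable D) (hZ : Measurable Z)
    (hg0 : Measurable g0) (hg1 : Measurable g1) (hm0 : Measurable m0)
    (hDbin : ∀ ω, D ω = 0 ∨ D ω = 1)
    -- `ζ = Y − g₀(D,Z)` with `E[ζ ∣ D, Z] = 0`:
    (hζ : μ[fun ω => Y ω - (D ω * g1 (Z ω) + (1 - D ω) * g0 (Z ω)) |
        MeasurableSpace.comap (fun ω => (D ω, Z ω)) inferInstance] =ᵐ[μ] 0)
    -- `m₀(Z) = E[D ∣ Z]` with `0 < m₀(Z) < 1` a.s.: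
    (hm : μ[D | MeasurableSpace.comap Z inferInstance] =ᵐ[μ] fun ω => m0 (Z ω))
    (hover : ∀ᵐ ω ∂μ, 0 < m0 (Z ω) ∧ m0 (Z ω) < 1)
    -- finite second moments of the score and its pieces:
    (hψ2 : Integrable (fun ω =>
        ((g1 (Z ω) - g0 (Z ω) - (∫ ω', (g1 (Z ω') - g0 (Z ω')) ∂μ))
        + D ω * (Y ω - (D ω * g1 (Z ω) + (1 - D ω) * g0 (Z ω))) / m0 (Z ω)
        - (1 - D ω) * (Y ω - (D ω * g1 (Z ω) + (1 - D ω) * g0 (Z ω))) / (1 - m0 (Z ω))) ^ 2) μ)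
    (ha2 : Integrable (fun ω =>
        (g1 (Z ω) - g0 (Z ω) - (∫ ω', (g1 (Z ω') - g0 (Z ω')) ∂μ)) ^ 2) μ)
    (hb2 : Integrable (fun ω =>
        ((D ω - m0 (Z ω)) * (Y ω - (D ω * g1 (Z ω) + (1 - D ω) * g0 (Z ω)))
          / (m0 (Z ω) * (1 - m0 (Z ω)))) ^ 2) μ)
    (hν2ζ2 : Integrable (fun ω =>
        (D ω - m0 (Z ω)) ^ 2 * (Y ω - (D ω * g1 (Z ω) + (1 - D ω) * g0 (Z ω))) ^ 2) μ) :
    ∫ ω, ((g1 (Z ω) - g0 (Z ω) - (∫ ω', (g1 (Z ω') - g0 (Z ω')) ∂μ))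
        + D ω * (Y ω - (D ω * g1 (Z ω) + (1 - D ω) * g0 (Z ω))) / m0 (Z ω)
        - (1 - D ω) * (Y ω - (D ω * g1 (Z ω) + (1 - D ω) * g0 (Z ω))) / (1 - m0 (Z ω))) ^ 2 ∂μ
      ≥ ∫ ω, (D ω - m0 (Z ω)) ^ 2
          * (Y ω - (D ω * g1 (Z ω) + (1 - D ω) * g0 (Z ω))) ^ 2 ∂μ :=
  statement11_general μ Y D Z g0 g1 m0 hY hD hZ hg0 hg1 hm0 hDbin hζ hover ha2 hb2
end
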